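/- arXiv:2303.09250 — 2 statements merged into one kernel-verified Lean document; each statement's English description precedes it below -/
import Mathlib

section
/- (Theorem 4.1) Let p ≥ 1 and let M be a 2p×2p complex matrix which, when partitioned into p² blocks of size 2×2, has all its blocks lying in Σ (i.e. each 2×2 block M_{jk} satisfies M_{jk}* = σ₂M_{jk}σ₂, where * is entrywise conjugation). Then det M is a nonnegative real number. -/
open Matrix Complex

noncomputable def sigma2 : Matrix (Fin 2) (Fin 2) ℂ := !![0, -Complex.I; Complex.I, 0]

/-- The (j,k)-th 2×2 block of a 2p×2p matrix indexed by `Fin p × Fin 2`. -/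
def blockAt {p : ℕ} (M : Matrix (Fin p × Fin 2) (Fin p × Fin 2) ℂ) (j k : Fin p) :
    Matrix (Fin 2) (Fin 2) ℂ :=
  fun a b => M (j, a) (k, b)

def InSigma (S : Matrix (Fin 2) (Fin 2) ℂ) : Prop :=
  S.map (starRingEnd ℂ) = sigma2 * S * sigma2

lemma sigma2_mul_sigma2 : sigma2 * sigma2 = 1 := by
  ext i j
  fin_cases i <;> fin_cases j <;>
    simp [sigma2, Matrix.mul_apply, Fin.sum_univ_two, Matrix.one_apply]

lemma InSigma.mul {X Y : Matrix (Fin 2) (Fin 2) ℂ} (hX : InSigma X) (hY : InSigma Y) :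
    InSigma (X * Y) := by
  unfold InSigma at *
  rw [Matrix.map_mul, hX, hY]
  have : sigma2 * (sigma2 * (Y * sigma2)) = Y * sigma2 := by
    rw [← mul_assoc, sigma2_mul_sigma2, one_mul]
  simp only [mul_assoc, this]

lemma InSigma.sub {X Y : Matrix (Fin 2) (Fin 2) ℂ} (hX : InSigma X) (hY : InSigma Y) :
    InSigma (X - Y) := by
  unfold InSigma at *
  rw [Matrix.map_sub _ (map_sub (starRingEnd ℂ)), hX, hY, Matrix.mul_sub, Matrix.sub_mul]

lemma InSigma.entries {A : Matrix (Fin 2) (Fin 2) ℂ} (h : InSigma A) :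
    A 1 1 = (starRingEnd ℂ) (A 0 0) ∧ A 0 1 = - (starRingEnd ℂ) (A 1 0) := by
  have h00 := congrFun (congrFun h 0) 0
  have h01 := congrFun (congrFun h 0) 1
  simp [sigma2, Matrix.mul_apply, Fin.sum_univ_two, Matrix.map_apply, Matrix.vecMul, dotProduct] at h00 h01
  have h2 : Complex.I * Complex.I = -1 := Complex.I_mul_I
  constructor
  · rw [h00]; linear_combination (A 1 1) * h2
  · have h01' := congrArg (starRingEnd ℂ) h01
    simp only [Complex.conj_conj, _root_.map_mul, map_neg, Complex.conj_I] at h01'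
    rw [h01']; linear_combination ((starRingEnd ℂ) (A 1 0)) * h2

lemma InSigma.det_eq {A : Matrix (Fin 2) (Fin 2) ℂ} (h : InSigma A) :
    A.det = ((normSq (A 0 0) + normSq (A 1 0) : ℝ) : ℂ) := by
  obtain ⟨h1, h2⟩ := h.entries
  rw [Matrix.det_fin_two, h1, h2]
  push_cast
  rw [← Complex.mul_conj, ← Complex.mul_conj]
  ring

lemma InSigma.det_pos {A : Matrix (Fin 2) (Fin 2) ℂ} (h : InSigma A) (hA : A ≠ 0) :
    0 < normSq (A 0 0) + normSq (A 1 0) := by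
  have hnn0 := normSq_nonneg (A 0 0)
  have hnn1 := normSq_nonneg (A 1 0)
  rcases (lt_or_eq_of_le (add_nonneg hnn0 hnn1)) with h' | h'
  · exact h'
  exfalso
  apply hA
  have ha : A 0 0 = 0 := normSq_eq_zero.mp (le_antisymm (by linarith) hnn0)
  have hc : A 1 0 = 0 := normSq_eq_zero.mp (le_antisymm (by linarith) hnn1)
  obtain ⟨h1, h2⟩ := h.entries
  ext i j
  fin_cases i <;> fin_cases j <;> simp [ha, hc, h1, h2]

lemma InSigma.inv {A : Matrix (Fin 2) (Fin 2) ℂ} (h : InSigma A) (hd : IsUnit A.det) :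
    InSigma A⁻¹ := by
  have h1 : A * A⁻¹ = 1 := Matrix.mul_nonsing_inv A hd
  have h2 : (A.map (starRingEnd ℂ)) * (A⁻¹.map (starRingEnd ℂ)) = 1 := by
    rw [← Matrix.map_mul, h1, Matrix.map_one _ (map_zero _) (map_one _)]
  have h4 : (A.map (starRingEnd ℂ)) * (sigma2 * A⁻¹ * sigma2) = 1 := by
    rw [h]
    calc sigma2 * A * sigma2 * (sigma2 * A⁻¹ * sigma2)
        = sigma2 * (A * (sigma2 * sigma2) * A⁻¹) * sigma2 := by
          simp only [mul_assoc]
      _ = 1 := by rw [sigma2_mul_sigma2, mul_one, h1, mul_one, sigma2_mul_sigma2]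
  have h3 : (A.map (starRingEnd ℂ))⁻¹ = A⁻¹.map (starRingEnd ℂ) := Matrix.inv_eq_right_inv h2
  have h5 : (A.map (starRingEnd ℂ))⁻¹ = sigma2 * A⁻¹ * sigma2 := Matrix.inv_eq_right_inv h4
  unfold InSigma
  rw [← h3, h5]

def splitEquiv (n : ℕ) : (Fin 2 ⊕ (Fin n × Fin 2)) ≃ (Fin (n+1) × Fin 2) where
  toFun x := Sum.elim (fun b => ((0 : Fin (n+1)), b)) (fun jb => (jb.1.succ, jb.2)) x
  invFun x := Fin.cases (Sum.inl x.2) (fun j => Sum.inr (j, x.2)) x.1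
  left_inv := by rintro (b | ⟨j, b⟩) <;> simp
  right_inv := by
    rintro ⟨j, b⟩
    induction j using Fin.cases <;> simp

lemma key : ∀ (n : ℕ) (M : Matrix (Fin n × Fin 2) (Fin n × Fin 2) ℂ),
    (∀ j k, InSigma (blockAt M j k)) → ∃ r : ℝ, 0 ≤ r ∧ M.det = (r : ℂ) := by
  intro n
  induction n with
  | zero =>
    intro M _
    exact ⟨1, zero_le_one, by simp [Matrix.det_isEmpty]⟩
  | succ n ih =>
    intro M hM
    by_cases hcol : ∀ j, blockAt M j 0 = 0
    · refine ⟨0, le_refl 0, ?_⟩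
      rw [Matrix.det_eq_zero_of_column_eq_zero ((0 : Fin (n+1)), (0 : Fin 2))]
      · simp
      intro i
      have := congrFun (congrFun (hcol i.1) i.2) 0
      simpa [blockAt] using this
    · push_neg at hcol
      obtain ⟨j₀, hj₀⟩ := hcol
      set σ : Equiv.Perm (Fin (n+1) × Fin 2) :=
        Equiv.prodCongrLeft (fun _ : Fin 2 => Equiv.swap (0 : Fin (n+1)) j₀) with hσ
      set N : Matrix (Fin (n+1) × Fin 2) (Fin (n+1) × Fin 2) ℂ := M.submatrix σ id with hN
      have hsign : Equiv.Perm.sign σ = 1 := by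
        rw [hσ, Equiv.Perm.sign_prodCongrLeft]
        simp [Fin.prod_univ_two, Int.units_mul_self]
      have hdetN : N.det = M.det := by
        rw [hN, Matrix.det_permute, hsign]
        simp
      have hblockN : ∀ j k, blockAt N j k = blockAt M (Equiv.swap (0 : Fin (n+1)) j₀ j) k := by
        intro j k; rfl
      have hNsig : ∀ j k, InSigma (blockAt N j k) := by
        intro j k; rw [hblockN]; exact hM _ _
      have hpivot : blockAt N 0 0 ≠ 0 := by
        rw [hblockN]
        simpa using hj₀
      set A : Matrix (Fin 2) (Fin 2) ℂ := blockAt N 0 0 with hA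
      set B : Matrix (Fin 2) (Fin n × Fin 2) ℂ :=
        Matrix.of (fun b kb => N (0, b) (kb.1.succ, kb.2)) with hB
      set C : Matrix (Fin n × Fin 2) (Fin 2) ℂ :=
        Matrix.of (fun jb b => N (jb.1.succ, jb.2) (0, b)) with hC
      set D : Matrix (Fin n × Fin 2) (Fin n × Fin 2) ℂ :=
        Matrix.of (fun jb kb => N (jb.1.succ, jb.2) (kb.1.succ, kb.2)) with hD
      have hsub : N.submatrix (splitEquiv n) (splitEquiv n) = Matrix.fromBlocks A B C D := by
        ext x y
        rcases x with b | ⟨j, b⟩ <;> rcases y with b' | ⟨k, b'⟩ <;> rfl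
      have hASig : InSigma A := hNsig 0 0
      have hdetA : A.det = ((normSq (A 0 0) + normSq (A 1 0) : ℝ) : ℂ) := hASig.det_eq
      have hpos : 0 < normSq (A 0 0) + normSq (A 1 0) := hASig.det_pos hpivot
      have hunit : IsUnit A.det := by
        rw [hdetA]
        exact Ne.isUnit (by exact_mod_cast ne_of_gt hpos)
      have : Invertible A := A.invertibleOfIsUnitDet hunit
      set S : Matrix (Fin n × Fin 2) (Fin n × Fin 2) ℂ := D - C * A⁻¹ * B with hS
      have hdetM : M.det = A.det * S.det := by
        rw [← hdetN, ← Matrix.det_submatrix_equiv_self (splitEquiv n) N, hsub,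
          Matrix.det_fromBlocks₁₁, Matrix.invOf_eq_nonsing_inv]
      have hSSig : ∀ j k, InSigma (blockAt S j k) := by
        intro j k
        have hblk : blockAt S j k =
            blockAt N j.succ k.succ - (blockAt N j.succ 0) * A⁻¹ * (blockAt N 0 k.succ) := by
          ext a b
          simp [hS, blockAt, Matrix.mul_apply, Matrix.sub_apply, hB, hC, hD]
        rw [hblk]
        exact ((hNsig j.succ k.succ)).sub
          (((hNsig j.succ 0).mul (hASig.inv hunit)).mul (hNsig 0 k.succ))
      obtain ⟨r₂, hr₂, hdetS⟩ := ih S hSSig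
      refine ⟨(normSq (A 0 0) + normSq (A 1 0)) * r₂, mul_nonneg (le_of_lt hpos) hr₂, ?_⟩
      rw [hdetM, hdetA, hdetS]
      push_cast
      ring

/-- Theorem 4.1: a 2p×2p complex matrix all of whose 2×2 blocks lie
in Σ (i.e. each block B satisfies B* = σ₂ B σ₂ entrywise-conjugate) has
nonnegative real determinant. -/
theorem det_nonneg_of_blocks_in_Sigma (p : ℕ) (hp : 1 ≤ p)
    (M : Matrix (Fin p × Fin 2) (Fin p × Fin 2) ℂ)
    (hM : ∀ j k : Fin p,
      (blockAt M j k).map (starRingEnd ℂ) = sigma2 * blockAt M j k * sigma2) :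
    ∃ r : ℝ, 0 ≤ r ∧ M.det = (r : ℂ) := by
  exact key p M hM
end

section
/- (Verification of the Marchenko solution (5.8)) Let A, H, P be n×n complex matrices with all eigenvalues of A having positive real part, AH = HA, and AP + PA = BC, where B is n×2 and C is 2×n. Fix t ∈ ℝ and x ∈ ℝ such that M := I_n + e^{−xA}·e^{tH}·P·e^{−xA} is invertible, and define Ω(w) := C·e^{−wA}·e^{tH}·B for w ∈ ℝ and K(y) := −C·e^{−xA}·M⁻¹·e^{−yA}·e^{tH}·B for y ∈ ℝ. Then for every y ∈ ℝ the integral ∫_x^∞ K(z)·Ω(z+y) dz converges and K(y) + Ω(x+y) + ∫_x^∞ K(z)·Ω(z+y) dz = 0 (as 2×2 matrices). -/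
/-!
Since `e^{tH}` commutes with `A`, the matrix `Q := e^{tH} P` satisfies `A Q + Q A = e^{tH} B C`,
so `K(z) Ω(z + y) = -C e^{-xA} M⁻¹ · e^{-zA} (A Q + Q A) e^{-zA} · e^{-yA} e^{tH} B`.
The middle factor is the derivative of `-e^{-zA} Q e^{-zA}`, which decays exponentially: the
spectrum of `e^{-A}` lies in `e^{-σ(A)}`, inside the unit disc, so Gelfand's formula bounds
`‖e^{-mA}‖` geometrically. Hence its integral over `(x, ∞)` is `e^{-xA} Q e^{-xA} = M - 1`, and the Marchenko equation
reduces to `M⁻¹ (M - 1) = 1 - M⁻¹`.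
-/

open Matrix Complex MeasureTheory Filter Asymptotics Topology Set

attribute [local instance] Matrix.linftyOpSemiNormedRing Matrix.linftyOpNormedAddCommGroup
  Matrix.linftyOpNormedRing Matrix.linftyOpNormedSpace Matrix.linftyOpNormedAlgebra

theorem isBigO_pow_floor_exp_log_mul {ρ : ℝ} (hρ : 0 < ρ) (hρ1 : ρ ≤ 1) :
    (fun z : ℝ => ρ ^ ⌊z⌋₊) =O[atTop] fun z => Real.exp (Real.log ρ * z) := by
  refine IsBigO.of_bound ρ⁻¹ (Eventually.of_forall fun z => ?_)
  have hfloor : z - 1 ≤ ⌊z⌋₊ := by linarith [Nat.lt_floor_add_one z]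
  calc ‖ρ ^ ⌊z⌋₊‖ = Real.exp (Real.log ρ * ⌊z⌋₊) := by
        rw [Real.norm_of_nonneg (by positivity), mul_comm, Real.exp_nat_mul, Real.exp_log hρ]
    _ ≤ Real.exp (Real.log ρ * (z - 1)) :=
        Real.exp_le_exp.mpr (mul_le_mul_of_nonpos_left hfloor (Real.log_nonpos hρ.le hρ1))
    _ = ρ⁻¹ * ‖Real.exp (Real.log ρ * z)‖ := by
        rw [Real.norm_of_nonneg (by positivity), mul_sub, mul_one, sub_eq_neg_add, Real.exp_add,
          Real.exp_neg, Real.exp_log hρ]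

theorem Module.End.exists_hasEigenvector_mem_eigenspace_of_commute {K V : Type*} [Field K]
    [IsAlgClosed K] [AddCommGroup V] [Module K V] [FiniteDimensional K V] {f g : End K V}
    (hfg : Commute f g) {c : K} (hc : g.HasEigenvalue c) :
    ∃ μ v, f.HasEigenvector μ v ∧ v ∈ g.eigenspace c := by
  have hmaps : ∀ v ∈ g.eigenspace c, f v ∈ g.eigenspace c := fun v hv =>
    mapsTo_genEigenspace_of_comm hfg.symm c 1 hv
  have : Nontrivial (g.eigenspace c) := Submodule.nontrivial_iff_ne_bot.mpr hc
  obtain ⟨μ, hμ⟩ := exists_eigenvalue (f.restrict hmaps)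
  obtain ⟨w, hw⟩ := hμ.exists_hasEigenvector
  refine ⟨μ, w, ⟨eigenspace_restrict_le_eigenspace f hmaps μ ⟨w, hw.1, rfl⟩, ?_⟩, w.2⟩
  exact_mod_cast hw.2

section BanachAlgebra

variable {𝔸 : Type*} [NormedRing 𝔸]

theorem isBigO_pow_of_spectralRadius_lt [NormedAlgebra ℂ 𝔸] [CompleteSpace 𝔸] {b : 𝔸} {ρ : ℝ}
    (hρ : spectralRadius ℂ b < ENNReal.ofReal ρ) :
    (fun m : ℕ => b ^ m) =O[atTop] fun m => ρ ^ m := by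
  have hroot : ∀ᶠ m : ℕ in atTop, ENNReal.ofReal (‖b ^ m‖ ^ (1 / m : ℝ)) < ENNReal.ofReal ρ :=
    (spectrum.pow_norm_pow_one_div_tendsto_nhds_spectralRadius b).eventually_lt_const hρ
  refine IsBigO.of_bound 1 ?_
  filter_upwards [hroot, eventually_ge_atTop 1] with m hm hm1
  have hρ0 : 0 < ρ := ENNReal.ofReal_pos.mp (pos_of_gt hm)
  calc ‖b ^ m‖ = (‖b ^ m‖ ^ (1 / m : ℝ)) ^ m := by
        rw [← Real.rpow_natCast, ← Real.rpow_mul (norm_nonneg _), one_div,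
          inv_mul_cancel₀ (by positivity), Real.rpow_one]
    _ ≤ ρ ^ m := pow_le_pow_left₀ (by positivity) ((ENNReal.ofReal_lt_ofReal_iff hρ0).mp hm).le m
    _ = 1 * ‖ρ ^ m‖ := by rw [one_mul, Real.norm_of_nonneg (by positivity)]

variable [NormedAlgebra ℝ 𝔸] {a : 𝔸} {c : ℝ}

theorem isBigO_exp_smul_mul_mul_exp_smul
    (hdecay : (fun z : ℝ => NormedSpace.exp (z • a)) =O[atTop] fun z => Real.exp (c * z))
    (q : 𝔸) :
    (fun z : ℝ => NormedSpace.exp (z • a) * q * NormedSpace.exp (z • a)) =O[atTop]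
      fun z => Real.exp (2 * c * z) := by
  refine ((hdecay.mul (isBigO_const_const q one_ne_zero atTop)).mul hdecay).congr_right
    fun z => ?_
  rw [mul_one, ← Real.exp_add]
  ring_nf

variable [CompleteSpace 𝔸]

theorem exp_add_smul (a : 𝔸) (s t : ℝ) :
    NormedSpace.exp ((s + t) • a) = NormedSpace.exp (s • a) * NormedSpace.exp (t • a) := by
  let +nondep : NormedAlgebra ℚ 𝔸 := .restrictScalars ℚ ℝ 𝔸
  rw [add_smul, NormedSpace.exp_add_of_commute (((Commute.refl a).smul_left s).smul_right t)]

theorem exp_smul_eq_exp_pow_floor_mul (a : 𝔸) (z : ℝ) :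
    NormedSpace.exp (z • a) =
      NormedSpace.exp a ^ ⌊z⌋₊ * NormedSpace.exp ((z - ⌊z⌋₊) • a) := by
  let +nondep : NormedAlgebra ℚ 𝔸 := .restrictScalars ℚ ℝ 𝔸
  rw [← NormedSpace.exp_nsmul, ← Nat.cast_smul_eq_nsmul ℝ, ← exp_add_smul, add_sub_cancel]

theorem isBigO_exp_smul_of_isBigO_pow {ρ : ℝ} (hρ : 0 < ρ) (hρ1 : ρ ≤ 1)
    (hpow : (fun m : ℕ => NormedSpace.exp a ^ m) =O[atTop] fun m => ρ ^ m) :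
    (fun z : ℝ => NormedSpace.exp (z • a)) =O[atTop] fun z => Real.exp (Real.log ρ * z) := by
  obtain ⟨K, hK⟩ := (isCompact_Icc (a := (0 : ℝ)) (b := 1)).exists_bound_of_continuousOn
    (differentiable_exp_smul_const (𝕂 := ℝ) a).continuous.continuousOn
  have hfrac : (fun z : ℝ => NormedSpace.exp ((z - ⌊z⌋₊) • a)) =O[atTop] fun _ => (1 : ℝ) := by
    refine IsBigO.of_bound K ?_
    filter_upwards [eventually_ge_atTop 0] with z hz
    rw [norm_one, mul_one]
    exact hK _ ⟨sub_nonneg.mpr (Nat.floor_le hz), by linarith [Nat.lt_floor_add_one z]⟩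
  have := ((hpow.comp_tendsto tendsto_nat_floor_atTop).trans
    (isBigO_pow_floor_exp_log_mul hρ hρ1)).mul hfrac
  simp only [mul_one] at this
  exact this.congr_left fun z => (exp_smul_eq_exp_pow_floor_mul a z).symm

theorem integrableOn_Ioi_exp_smul_mul_mul_exp_smul (hc : c < 0)
    (hdecay : (fun z : ℝ => NormedSpace.exp (z • a)) =O[atTop] fun z => Real.exp (c * z))
    (q : 𝔸) (x : ℝ) :
    IntegrableOn (fun z : ℝ => NormedSpace.exp (z • a) * q * NormedSpace.exp (z • a)) (Ioi x) := by
  have hcont : Continuous fun z : ℝ => NormedSpace.exp (z • a) * q * NormedSpace.exp (z • a) :=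
    ((differentiable_exp_smul_const (𝕂 := ℝ) a).continuous.mul continuous_const).mul
      (differentiable_exp_smul_const (𝕂 := ℝ) a).continuous
  have hexp : IntegrableAtFilter (fun z : ℝ => Real.exp (2 * c * z)) atTop :=
    ⟨Ioi 0, Ioi_mem_atTop 0, by
      simpa only [neg_neg, neg_mul] using exp_neg_integrableOn_Ioi 0 (b := -(2 * c)) (by linarith)⟩
  exact ((hcont.locallyIntegrable.locallyIntegrableOn _).integrableOn_of_isBigO_atTop
    (isBigO_exp_smul_mul_mul_exp_smul hdecay q) hexp).mono_set Ioi_subset_Ici_self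

theorem hasDerivAt_exp_smul_mul_mul_exp_smul (a q : 𝔸) (z : ℝ) :
    HasDerivAt (fun w : ℝ => NormedSpace.exp (w • a) * q * NormedSpace.exp (w • a))
      (NormedSpace.exp (z • a) * (a * q + q * a) * NormedSpace.exp (z • a)) z := by
  refine (((hasDerivAt_exp_smul_const a z).mul_const q).mul
    (hasDerivAt_exp_smul_const' a z)).congr_deriv ?_
  simp only [mul_add, add_mul, mul_assoc]

theorem integral_Ioi_exp_smul_neg_mul_mul_exp_smul_neg (hc : c < 0)
    (hdecay : (fun z : ℝ => NormedSpace.exp (z • -a)) =O[atTop] fun z => Real.exp (c * z))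
    (q : 𝔸) (x : ℝ) :
    ∫ z in Ioi x, NormedSpace.exp (z • -a) * (a * q + q * a) * NormedSpace.exp (z • -a) =
      NormedSpace.exp (x • -a) * q * NormedSpace.exp (x • -a) := by
  have hderiv (z : ℝ) := (hasDerivAt_exp_smul_mul_mul_exp_smul (-a) q z).neg
  simp only [neg_mul, mul_neg, ← neg_add, neg_neg] at hderiv
  have hlim := ((isBigO_exp_smul_mul_mul_exp_smul hdecay q).trans_tendsto
    (Real.tendsto_exp_atBot.comp (tendsto_id.const_mul_atTop_of_neg (by linarith)))).neg
  rw [neg_zero] at hlim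
  rw [integral_Ioi_of_hasDerivAt_of_tendsto' (fun z _ => hderiv z)
    (integrableOn_Ioi_exp_smul_mul_mul_exp_smul hc hdecay _ x) hlim, zero_sub, Pi.neg_apply,
    neg_neg]

end BanachAlgebra

namespace Matrix

variable {m n p : Type*} [Fintype n] [DecidableEq n]

theorem exp_mulVec_of_mulVec_eq_smul {A : Matrix n n ℂ} {μ : ℂ} {v : n → ℂ}
    (hv : A *ᵥ v = μ • v) : NormedSpace.exp A *ᵥ v = Complex.exp μ • v := by
  have hsemi : SemiconjBy (replicateCol n v) (algebraMap ℂ _ μ) A := by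
    rw [SemiconjBy, ← replicateCol_mulVec, hv, Algebra.algebraMap_eq_smul_one, Matrix.mul_smul,
      Matrix.mul_one, replicateCol_smul]
  have hexp := hsemi.exp_right
  rw [← NormedSpace.algebraMap_exp_comm, Algebra.algebraMap_eq_smul_one, SemiconjBy,
    Matrix.mul_smul, Matrix.mul_one, ← replicateCol_mulVec, ← replicateCol_smul,
    ← Complex.exp_eq_exp_ℂ] at hexp
  funext i
  exact congrFun (congrFun hexp.symm i) i

theorem spectrum_exp_subset (A : Matrix n n ℂ) :
    spectrum ℂ (NormedSpace.exp A) ⊆ Complex.exp '' spectrum ℂ A := by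
  intro c hc
  rw [← spectrum_toLin', ← Module.End.hasEigenvalue_iff_mem_spectrum] at hc
  obtain ⟨μ, v, hv, hvc⟩ := Module.End.exists_hasEigenvector_mem_eigenspace_of_commute
    ((Commute.refl A).exp_right.map toLinAlgEquiv') hc
  refine ⟨μ, ?_, ?_⟩
  · rw [← spectrum_toLin', ← Module.End.hasEigenvalue_iff_mem_spectrum]
    exact Module.End.hasEigenvalue_of_hasEigenvector hv
  · have hμ : NormedSpace.exp A *ᵥ v = Complex.exp μ • v :=
      exp_mulVec_of_mulVec_eq_smul (by simpa using hv.apply_eq_smul)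
    have hc : NormedSpace.exp A *ᵥ v = c • v := by
      simpa using Module.End.mem_eigenspace_iff.mp hvc
    exact smul_left_injective ℂ hv.2 (hμ.symm.trans hc)

theorem spectralRadius_exp_neg_lt_one {A : Matrix n n ℂ} (hA : ∀ μ ∈ spectrum ℂ A, 0 < μ.re) :
    spectralRadius ℂ (NormedSpace.exp (-A)) < 1 := by
  rcases (spectrum ℂ (NormedSpace.exp (-A))).eq_empty_or_nonempty with hempty | hne
  · simp [spectralRadius, hempty]
  refine spectrum.spectralRadius_lt_of_forall_lt_of_nonempty hne fun k hk => ?_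
  obtain ⟨μ, hμ, rfl⟩ := spectrum_exp_subset (-A) hk
  rw [← spectrum.neg_eq, Set.mem_neg] at hμ
  have hre : μ.re < 0 := by simpa using hA _ hμ
  rw [← NNReal.coe_lt_coe, coe_nnnorm, Complex.norm_exp, NNReal.coe_one]
  exact Real.exp_lt_one_iff.mpr hre

theorem exists_isBigO_exp_smul_neg {A : Matrix n n ℂ} (hA : ∀ μ ∈ spectrum ℂ A, 0 < μ.re) :
    ∃ c < 0, (fun z : ℝ => NormedSpace.exp (z • -A)) =O[atTop] fun z => Real.exp (c * z) := by
  obtain ⟨ρ, -, hρ, hρ1⟩ := ENNReal.lt_iff_exists_real_btwn.mp (spectralRadius_exp_neg_lt_one hA)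
  have hρ0 : 0 < ρ := ENNReal.ofReal_pos.mp (pos_of_gt hρ)
  replace hρ1 : ρ < 1 := ENNReal.ofReal_lt_one.mp hρ1
  exact ⟨Real.log ρ, Real.log_neg hρ0 hρ1,
    isBigO_exp_smul_of_isBigO_pow hρ0 hρ1.le (isBigO_pow_of_spectralRadius_lt hρ)⟩

/- Stated entrywise because the matrix-valued integral is taken for the `L∞`-operator norm, whose
topology is only propositionally, not syntactically, the product topology of `Matrix`. -/
theorem integrableOn_and_integral_Ioi_mul_exp_smul_neg_mul_apply [Fintype p] {A : Matrix n n ℂ}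
    (hA : ∀ μ ∈ spectrum ℂ A, 0 < μ.re) (Q : Matrix n n ℂ) (L : Matrix m n ℂ) (R : Matrix n p ℂ)
    (x : ℝ) (j : m) (k : p) :
    IntegrableOn (fun z : ℝ =>
      (L * (NormedSpace.exp (z • -A) * (A * Q + Q * A) * NormedSpace.exp (z • -A)) * R) j k)
      (Ioi x) ∧
    ∫ z in Ioi x,
      (L * (NormedSpace.exp (z • -A) * (A * Q + Q * A) * NormedSpace.exp (z • -A)) * R) j k =
      (L * (NormedSpace.exp (x • -A) * Q * NormedSpace.exp (x • -A)) * R) j k := by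
  obtain ⟨c, hc, hdecay⟩ := exists_isBigO_exp_smul_neg hA
  have hF := integrableOn_Ioi_exp_smul_mul_mul_exp_smul hc hdecay (A * Q + Q * A) x
  let ψ : Matrix n n ℂ →L[ℂ] ℂ := LinearMap.toContinuousLinearMap
    (entryLinearMap ℂ ℂ j k ∘ₗ mulRightLinearMap m ℂ R ∘ₗ mulLeftLinearMap n ℂ L)
  exact ⟨ψ.integrable_comp hF, (ψ.integral_comp_comm hF).trans
    (congrArg ψ (integral_Ioi_exp_smul_neg_mul_mul_exp_smul_neg hc hdecay Q x))⟩

end Matrix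

/-- verification of the Marchenko solution (5.8): with all
eigenvalues of A of positive real part, AH = HA, AP + PA = BC, and
M := I + e^{−xA}e^{tH}Pe^{−xA} invertible, the function
K(y) := −C e^{−xA} M⁻¹ e^{−yA} e^{tH} B solves the Marchenko equation
K(y) + Ω(x+y) + ∫_x^∞ K(z)Ω(z+y) dz = 0 with Ω(w) := C e^{−wA} e^{tH} B,
the integral converging entrywise. -/
theorem marchenko_solution_verification (n : ℕ)
    (A H P : Matrix (Fin n) (Fin n) ℂ)
    (B : Matrix (Fin n) (Fin 2) ℂ) (C : Matrix (Fin 2) (Fin n) ℂ)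
    (hspec : ∀ μ ∈ spectrum ℂ A, 0 < μ.re)
    (hcomm : A * H = H * A)
    (hSyl : A * P + P * A = B * C)
    (t x : ℝ)
    (M : Matrix (Fin n) (Fin n) ℂ)
    (hMdef : M = 1 + NormedSpace.exp (-(x • A)) * NormedSpace.exp (t • H) * P *
      NormedSpace.exp (-(x • A)))
    (hM : IsUnit M)
    (Ω : ℝ → Matrix (Fin 2) (Fin 2) ℂ)
    (hΩdef : ∀ w : ℝ, Ω w = C * NormedSpace.exp (-(w • A)) * NormedSpace.exp (t • H) * B)
    (K : ℝ → Matrix (Fin 2) (Fin 2) ℂ)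
    (hKdef : ∀ y : ℝ, K y = -(C * NormedSpace.exp (-(x • A)) * M⁻¹ *
      NormedSpace.exp (-(y • A)) * NormedSpace.exp (t • H) * B)) :
    ∀ y : ℝ,
      (∀ j k : Fin 2, IntegrableOn (fun z : ℝ => (K z * Ω (z + y)) j k) (Set.Ioi x)) ∧
      K y + Ω (x + y) +
        (Matrix.of fun j k => ∫ z in Set.Ioi x, (K z * Ω (z + y)) j k) = 0 := by
  intro y
  simp only [← smul_neg] at hMdef hΩdef hKdef
  -- restated so that `rw` sees the product topology of the statement, not the normed one
  have hgadd : ∀ w w' : ℝ, NormedSpace.exp ((w + w') • -A) =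
      NormedSpace.exp (w • -A) * NormedSpace.exp (w' • -A) := exp_add_smul (-A)
  set E := NormedSpace.exp (t • H)
  set L := C * NormedSpace.exp (x • -A) * M⁻¹
  set R := NormedSpace.exp (y • -A) * E * B
  have hsylvester : A * (E * P) + E * P * A = E * (B * C) := by
    have hAE : A * E = E * A := ((Commute.smul_right hcomm t).exp_right).eq
    rw [← hSyl, Matrix.mul_add, ← Matrix.mul_assoc, hAE, Matrix.mul_assoc, Matrix.mul_assoc]
  have hkernel : ∀ z, K z * Ω (z + y) = -L *
      (NormedSpace.exp (z • -A) * (A * (E * P) + E * P * A) * NormedSpace.exp (z • -A)) * R := by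
    intro z
    rw [hsylvester, hKdef, hΩdef, hgadd]
    simp only [L, R, Matrix.mul_assoc, Matrix.neg_mul]
  have hentry :=
    Matrix.integrableOn_and_integral_Ioi_mul_exp_smul_neg_mul_apply hspec (E * P) (-L) R x
  simp only [hkernel]
  refine ⟨fun j k => (hentry j k).1, ?_⟩
  have hMinv : ∀ X : Matrix (Fin n) (Fin 2) ℂ, M⁻¹ * (M * X) = X := fun X => by
    rw [← Matrix.mul_assoc, nonsing_inv_mul M ((isUnit_iff_isUnit_det M).mp hM), Matrix.one_mul]
  have hM1 : NormedSpace.exp (x • -A) * (E * P) * NormedSpace.exp (x • -A) = M - 1 := by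
    rw [hMdef, add_sub_cancel_left, Matrix.mul_assoc _ E]
  rw [show (of fun j k => _) = _ from ext fun j k => (hentry j k).2, hM1, hKdef, hΩdef, hgadd]
  simp only [L, R, Matrix.neg_mul, Matrix.mul_sub, Matrix.sub_mul, Matrix.mul_one,
    Matrix.mul_assoc, hMinv]
  abel
end
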